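/- arXiv:1206.3044 — 2 statements merged into one kernel-verified Lean document; each statement's English description precedes it below -/
import Mathlib

section
/- Let H be a real separable Hilbert space, M a σ-finite Borel measure on H∖{0} with ∫ min(1,‖x‖²) M(dx) < ∞, and let e(dt) = e^{-t} dt be the standard exponential distribution on (0,∞). Then the mixture M^(e)(A) := ∫₀^∞ M(t^{-1}A) e^{-t} dt satisfies ∫_{H∖{0}} min(1,‖y‖²) M^(e)(dy) ≤ 2 ∫_{0<‖x‖≤1} ‖x‖² M(dx) + K · M({‖x‖ > 1}) < ∞ for some constant K, so M^(e) is a Lévy spectral measure. -/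
/-!
By Tonelli, `∫ min(1, ‖y‖²) dM^(e) = ∫ g dM` with `g x = ∫₀^∞ min(1, t²‖x‖²) e^{-t} dt`.
As `e` is a probability measure with second moment `Γ(3) = 2`, `g x ≤ 1` and `g x ≤ 2‖x‖²`
(and `g 0 = 0`), so `K = 1` works, and both terms are bounded by `∫ min(1, ‖x‖²) dM`.
-/

open MeasureTheory Set
open scoped ENNReal Nat

theorem lintegral_pow_mul_exp_neg_Ioi (n : ℕ) :
    ∫⁻ t in Ioi (0 : ℝ), ENNReal.ofReal (t ^ n * Real.exp (-t)) = n ! := by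
  have hn : (0 : ℝ) < n + 1 := by positivity
  have hGamma : EqOn (fun t : ℝ => ENNReal.ofReal (t ^ n * Real.exp (-t)))
      (fun t => ENNReal.ofReal (Real.exp (-t) * t ^ ((n + 1 : ℝ) - 1))) (Ioi 0) := fun t _ => by
    simp [mul_comm]
  rw [setLIntegral_congr_fun measurableSet_Ioi hGamma,
    ← ofReal_integral_eq_lintegral_ofReal (Real.GammaIntegral_convergent hn)
      ((ae_restrict_mem measurableSet_Ioi).mono fun t (ht : 0 < t) => by positivity),
    ← Real.Gamma_eq_integral hn, Real.Gamma_nat_eq_factorial, ENNReal.ofReal_natCast]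

noncomputable def expDistribution : Measure ℝ :=
  (volume.restrict (Ioi 0)).withDensity fun t => ENNReal.ofReal (Real.exp (-t))

theorem lintegral_expDistribution {f : ℝ → ℝ≥0∞} (hf : Measurable f) :
    ∫⁻ t, f t ∂expDistribution = ∫⁻ t in Ioi 0, ENNReal.ofReal (Real.exp (-t)) * f t :=
  lintegral_withDensity_eq_lintegral_mul _
    (Real.measurable_exp.comp measurable_neg).ennreal_ofReal hf

instance : IsProbabilityMeasure expDistribution where
  measure_univ := by
    simpa [expDistribution] using lintegral_pow_mul_exp_neg_Ioi 0

theorem lintegral_sq_expDistribution :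
    ∫⁻ t, ENNReal.ofReal (t ^ 2) ∂expDistribution = 2 := by
  rw [lintegral_expDistribution (by fun_prop)]
  convert lintegral_pow_mul_exp_neg_Ioi 2 using 3 with t
  · rw [← ENNReal.ofReal_mul (Real.exp_pos _).le, mul_comm]
  · rfl

section Mixture

variable {E : Type*} [NormedAddCommGroup E] [NormedSpace ℝ E]

theorem lintegral_min_one_sq_smul_le_one (ν : Measure ℝ) [IsProbabilityMeasure ν] (x : E) :
    ∫⁻ t, ENNReal.ofReal (min 1 (‖t • x‖ ^ 2)) ∂ν ≤ 1 :=
  (lintegral_mono fun _ => ENNReal.ofReal_le_one.2 (min_le_left _ _)).trans_eq (by simp)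

theorem lintegral_min_one_sq_smul_le (ν : Measure ℝ) (x : E) :
    ∫⁻ t, ENNReal.ofReal (min 1 (‖t • x‖ ^ 2)) ∂ν
      ≤ (∫⁻ t, ENNReal.ofReal (t ^ 2) ∂ν) * ENNReal.ofReal (‖x‖ ^ 2) := by
  rw [← lintegral_mul_const' _ _ ENNReal.ofReal_ne_top]
  refine lintegral_mono fun t => ?_
  rw [← ENNReal.ofReal_mul (sq_nonneg t)]
  refine ENNReal.ofReal_le_ofReal ((min_le_right _ _).trans_eq ?_)
  rw [norm_smul, mul_pow, Real.norm_eq_abs, sq_abs]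

theorem lintegral_min_one_sq_smul_expDistribution_le (x : E) :
    ∫⁻ t, ENNReal.ofReal (min 1 (‖t • x‖ ^ 2)) ∂expDistribution
      ≤ 2 * {x : E | 0 < ‖x‖ ∧ ‖x‖ ≤ 1}.indicator (fun x => ENNReal.ofReal (‖x‖ ^ 2)) x
        + {x : E | 1 < ‖x‖}.indicator 1 x := by
  rcases eq_or_ne x 0 with rfl | hx
  · simp
  rcases le_or_gt ‖x‖ 1 with hx1 | hx1
  · rw [indicator_of_mem (show x ∈ {x : E | 0 < ‖x‖ ∧ ‖x‖ ≤ 1} from ⟨norm_pos_iff.2 hx, hx1⟩),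
      indicator_of_notMem (show x ∉ {x : E | 1 < ‖x‖} from hx1.not_gt), add_zero,
      ← lintegral_sq_expDistribution]
    exact lintegral_min_one_sq_smul_le expDistribution x
  · rw [indicator_of_notMem (show x ∉ {x : E | 0 < ‖x‖ ∧ ‖x‖ ≤ 1} from fun h => hx1.not_ge h.2),
      indicator_of_mem (show x ∈ {x : E | 1 < ‖x‖} from hx1)]
    simpa using lintegral_min_one_sq_smul_le_one expDistribution x

variable [MeasurableSpace E] [BorelSpace E]

/-- `M^(e)(A) = ∫₀^∞ M(t⁻¹A) e^{-t} dt` is the image of `e ⊗ M` under `(t, x) ↦ t • x`. -/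
noncomputable def expMixture (M : Measure E) : Measure E :=
  (expDistribution.prod M).map fun p => p.1 • p.2

theorem lintegral_expMixture (M : Measure E) [SFinite M] {f : E → ℝ≥0∞} (hf : Measurable f) :
    ∫⁻ y, f y ∂expMixture M = ∫⁻ x, ∫⁻ t, f (t • x) ∂expDistribution ∂M := by
  rw [expMixture, lintegral_map hf (by fun_prop),
    lintegral_prod_symm (fun p : ℝ × E => f (p.1 • p.2)) (hf.comp (by fun_prop)).aemeasurable]

theorem lintegral_min_one_sq_expMixture_le (M : Measure E) [SFinite M] :
    ∫⁻ y, ENNReal.ofReal (min 1 (‖y‖ ^ 2)) ∂expMixture M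
      ≤ 2 * ∫⁻ x in {x : E | 0 < ‖x‖ ∧ ‖x‖ ≤ 1}, ENNReal.ofReal (‖x‖ ^ 2) ∂M
        + M {x : E | 1 < ‖x‖} := by
  have hA : MeasurableSet {x : E | 0 < ‖x‖ ∧ ‖x‖ ≤ 1} := by measurability
  have hB : MeasurableSet {x : E | 1 < ‖x‖} := measurableSet_lt measurable_const measurable_norm
  have hsq : Measurable fun x : E => ENNReal.ofReal (‖x‖ ^ 2) := by fun_prop
  calc _ = ∫⁻ x, ∫⁻ t, ENNReal.ofReal (min 1 (‖t • x‖ ^ 2)) ∂expDistribution ∂M :=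
        lintegral_expMixture M (by fun_prop)
    _ ≤ ∫⁻ x, (2 * {x : E | 0 < ‖x‖ ∧ ‖x‖ ≤ 1}.indicator (fun x => ENNReal.ofReal (‖x‖ ^ 2)) x
          + {x : E | 1 < ‖x‖}.indicator 1 x) ∂M :=
        lintegral_mono lintegral_min_one_sq_smul_expDistribution_le
    _ = _ := by
      rw [lintegral_add_right _ (measurable_one.indicator hB),
        lintegral_const_mul _ (hsq.indicator hA),
        lintegral_indicator hA, lintegral_indicator_one hB]

end Mixture

theorem setLIntegral_sq_le_lintegral_min_one_sq {E : Type*} [NormedAddCommGroup E]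
    [MeasurableSpace E] [OpensMeasurableSpace E] (M : Measure E) :
    ∫⁻ x in {x : E | 0 < ‖x‖ ∧ ‖x‖ ≤ 1}, ENNReal.ofReal (‖x‖ ^ 2) ∂M
      ≤ ∫⁻ x, ENNReal.ofReal (min 1 (‖x‖ ^ 2)) ∂M := by
  refine (setLIntegral_mono' (by measurability) fun x hx => ?_).trans
    (setLIntegral_le_lintegral _ _)
  rw [min_eq_right (pow_le_one₀ (norm_nonneg x) hx.2)]

theorem measure_one_lt_norm_le_lintegral_min_one_sq {E : Type*} [NormedAddCommGroup E]
    [MeasurableSpace E] [OpensMeasurableSpace E] (M : Measure E) :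
    M {x : E | 1 < ‖x‖} ≤ ∫⁻ x, ENNReal.ofReal (min 1 (‖x‖ ^ 2)) ∂M := by
  rw [← setLIntegral_one]
  refine (setLIntegral_mono' (measurableSet_lt measurable_const measurable_norm)
    fun x (hx : 1 < ‖x‖) => ?_).trans (setLIntegral_le_lintegral _ _)
  rw [min_eq_left (one_le_pow₀ hx.le), ENNReal.ofReal_one]

theorem exp_mixture_is_levy_measure_general
    {H : Type*} [NormedAddCommGroup H] [InnerProductSpace ℝ H]
    [MeasurableSpace H] [BorelSpace H]
    (M : Measure H) [SigmaFinite M]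
    (hM : (∫⁻ x, ENNReal.ofReal (min 1 (‖x‖ ^ 2)) ∂M) < ⊤) :
    ∃ K : ℝ, 0 ≤ K ∧
      (∫⁻ y, ENNReal.ofReal (min 1 (‖y‖ ^ 2))
          ∂(Measure.map (fun p : ℝ × H => p.1 • p.2)
            ((((volume : Measure ℝ).restrict (Ioi 0)).withDensity
                (fun t => ENNReal.ofReal (Real.exp (-t)))).prod M)))
        ≤ 2 * (∫⁻ x in {x : H | 0 < ‖x‖ ∧ ‖x‖ ≤ 1}, ENNReal.ofReal (‖x‖ ^ 2) ∂M)
            + ENNReal.ofReal K * M {x : H | 1 < ‖x‖}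
      ∧ (∫⁻ y, ENNReal.ofReal (min 1 (‖y‖ ^ 2))
          ∂(Measure.map (fun p : ℝ × H => p.1 • p.2)
            ((((volume : Measure ℝ).restrict (Ioi 0)).withDensity
                (fun t => ENNReal.ofReal (Real.exp (-t)))).prod M))) < ⊤ := by
  have hbound := lintegral_min_one_sq_expMixture_le M
  rw [expMixture, expDistribution] at hbound
  refine ⟨1, zero_le_one, by rwa [ENNReal.ofReal_one, one_mul], hbound.trans_lt ?_⟩
  exact ENNReal.add_lt_top.2
    ⟨ENNReal.mul_lt_top ENNReal.ofNat_lt_top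
      ((setLIntegral_sq_le_lintegral_min_one_sq M).trans_lt hM),
      (measure_one_lt_norm_le_lintegral_min_one_sq M).trans_lt hM⟩

/-- The exponential mixture `M^(e)` of a Lévy spectral measure `M` on a real separable
Hilbert space is again a Lévy spectral measure, with the explicit bound
`∫ min(1,‖y‖²) dM^(e) ≤ 2 ∫_{0<‖x‖≤1} ‖x‖² dM + K · M{‖x‖>1} < ∞`. -/
theorem exp_mixture_is_levy_measure
    {H : Type*} [NormedAddCommGroup H] [InnerProductSpace ℝ H]
    [SecondCountableTopology H] [CompleteSpace H]
    [MeasurableSpace H] [BorelSpace H]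
    (M : Measure H) [SigmaFinite M] (hM0 : M {0} = 0)
    (hM : (∫⁻ x, ENNReal.ofReal (min 1 (‖x‖ ^ 2)) ∂M) < ⊤) :
    ∃ K : ℝ, 0 ≤ K ∧
      (∫⁻ y, ENNReal.ofReal (min 1 (‖y‖ ^ 2))
          ∂(Measure.map (fun p : ℝ × H => p.1 • p.2)
            ((((volume : Measure ℝ).restrict (Ioi 0)).withDensity
                (fun t => ENNReal.ofReal (Real.exp (-t)))).prod M)))
        ≤ 2 * (∫⁻ x in {x : H | 0 < ‖x‖ ∧ ‖x‖ ≤ 1}, ENNReal.ofReal (‖x‖ ^ 2) ∂M)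
            + ENNReal.ofReal K * M {x : H | 1 < ‖x‖}
      ∧ (∫⁻ y, ENNReal.ofReal (min 1 (‖y‖ ^ 2))
          ∂(Measure.map (fun p : ℝ × H => p.1 • p.2)
            ((((volume : Measure ℝ).restrict (Ioi 0)).withDensity
                (fun t => ENNReal.ofReal (Real.exp (-t)))).prod M))) < ⊤ :=
  exp_mixture_is_levy_measure_general M hM
end

section
/- Let 0 < α < 2 and let M be a Borel measure on a real separable Hilbert space H with M({0}) = 0 and ∫_{H∖{0}} ‖x‖^α M(dx) < ∞. Then M^(ρ_α)(A) := ∫₀^∞ ∫_{H∖{0}} 1_A(tx) M(dx) t^{-α-1} e^{-t} dt satisfies ∫_{H∖{0}} min(1,‖y‖²) M^(ρ_α)(dy) < ∞, i.e., M^(ρ_α) is a Lévy spectral measure. -/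
/-!
By Tonelli, the integral of `min 1 ‖y‖²` against the mixture is
`∫_H ∫₀^∞ min(1, t²‖x‖²) ρ_α(dt) M(dx)`. Bounding `e^{-t}` by `1` and splitting the inner integral
at `t = ‖x‖⁻¹`, it is at most `‖x‖^α (1/(2-α) + 1/α) = 2‖x‖^α / ((2-α)α)`, so the whole integral
is bounded by a constant multiple of `∫ ‖x‖^α dM < ∞`.
-/

open MeasureTheory Set

namespace LevyMeasure

lemma setLIntegral_Ioc_zero_rpow {β : ℝ} (hβ : -1 < β) {c : ℝ} (hc : 0 ≤ c) :
    ∫⁻ t in Ioc 0 c, ENNReal.ofReal (t ^ β) = ENNReal.ofReal (c ^ (β + 1) / (β + 1)) := by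
  rw [← ofReal_integral_eq_lintegral_ofReal, ← intervalIntegral.integral_of_le hc,
    integral_rpow (Or.inl hβ), Real.zero_rpow (by linarith), sub_zero]
  · exact (intervalIntegrable_iff_integrableOn_Ioc_of_le hc).mp
      (intervalIntegral.intervalIntegrable_rpow' hβ)
  · filter_upwards [self_mem_ae_restrict measurableSet_Ioc] with t ht
    exact Real.rpow_nonneg ht.1.le _

lemma setLIntegral_Ioi_rpow {β : ℝ} (hβ : β < -1) {c : ℝ} (hc : 0 < c) :
    ∫⁻ t in Ioi c, ENNReal.ofReal (t ^ β) = ENNReal.ofReal (-c ^ (β + 1) / (β + 1)) := by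
  rw [← ofReal_integral_eq_lintegral_ofReal, integral_Ioi_rpow_of_lt hβ hc]
  · exact integrableOn_Ioi_rpow_of_lt hβ hc
  · filter_upwards [self_mem_ae_restrict measurableSet_Ioi] with t ht
    exact Real.rpow_nonneg (hc.trans ht).le _

lemma setLIntegral_Ioi_min_one_sq_mul_rpow {α : ℝ} (hα0 : 0 < α) (hα2 : α < 2) {r : ℝ}
    (hr : 0 < r) :
    ∫⁻ t in Ioi 0, ENNReal.ofReal (min 1 ((t * r) ^ 2) * t ^ (-α - 1)) =
      ENNReal.ofReal (2 / ((2 - α) * α) * r ^ α) := by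
  have hc : 0 < r⁻¹ := inv_pos.mpr hr
  have hsmall : EqOn (fun t => ENNReal.ofReal (min 1 ((t * r) ^ 2) * t ^ (-α - 1)))
      (fun t => ENNReal.ofReal (r ^ 2) * ENNReal.ofReal (t ^ (1 - α))) (Ioc 0 r⁻¹) := by
    rintro t ⟨ht0, htc⟩
    have htr : t * r ≤ 1 := (le_inv_mul_iff₀' hr).mp (by rwa [mul_one])
    dsimp only
    rw [min_eq_right (pow_le_one₀ (by positivity) htr), ← ENNReal.ofReal_mul (sq_nonneg r)]
    congr 1
    rw [show 1 - α = 2 + (-α - 1) by ring, Real.rpow_add ht0, Real.rpow_two]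
    ring
  have hlarge : EqOn (fun t => ENNReal.ofReal (min 1 ((t * r) ^ 2) * t ^ (-α - 1)))
      (fun t => ENNReal.ofReal (t ^ (-α - 1))) (Ioi r⁻¹) := by
    intro t (ht : r⁻¹ < t)
    have htr : 1 ≤ t * r := ((inv_lt_iff_one_lt_mul₀ hr).mp ht).le
    dsimp only
    rw [min_eq_left (one_le_pow₀ htr), one_mul]
  rw [← Ioc_union_Ioi_eq_Ioi hc.le, lintegral_union measurableSet_Ioi (Ioc_disjoint_Ioi le_rfl),
    setLIntegral_congr_fun measurableSet_Ioc hsmall, setLIntegral_congr_fun measurableSet_Ioi hlarge,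
    lintegral_const_mul _ (by fun_prop), setLIntegral_Ioc_zero_rpow (by linarith) hc.le,
    setLIntegral_Ioi_rpow (by linarith) hc, ← ENNReal.ofReal_mul (sq_nonneg r)]
  have h2α : 0 < 2 - α := by linarith
  have hsmall_val : r ^ 2 * (r⁻¹ ^ (1 - α + 1) / (1 - α + 1)) = r ^ α / (2 - α) := by
    rw [Real.inv_rpow hr.le, show 1 - α + 1 = 2 - α by ring, Real.rpow_sub hr, Real.rpow_two]
    field_simp
  have hlarge_val : -r⁻¹ ^ (-α - 1 + 1) / (-α - 1 + 1) = r ^ α / α := by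
    rw [show -α - 1 + 1 = -α by ring, Real.inv_rpow hr.le, Real.rpow_neg hr.le, inv_inv]
    field_simp
  rw [hsmall_val, hlarge_val, ← ENNReal.ofReal_add (by positivity) (by positivity)]
  congr 1
  field_simp
  ring

-- `ρ_α` of the paper.
noncomputable def rhoAlpha (α : ℝ) : Measure ℝ :=
  (volume.restrict (Ioi 0)).withDensity fun t => ENNReal.ofReal (t ^ (-α - 1) * Real.exp (-t))

instance (α : ℝ) : SFinite (rhoAlpha α) := by
  unfold rhoAlpha
  infer_instance

lemma lintegral_min_one_norm_smul_sq_rhoAlpha_le {E : Type*} [NormedAddCommGroup E]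
    [NormedSpace ℝ E] {α : ℝ} (hα0 : 0 < α) (hα2 : α < 2) (x : E) :
    ∫⁻ t, ENNReal.ofReal (min 1 (‖t • x‖ ^ 2)) ∂rhoAlpha α ≤
      ENNReal.ofReal (2 / ((2 - α) * α) * ‖x‖ ^ α) := by
  rw [rhoAlpha, lintegral_withDensity_eq_lintegral_mul _ (by fun_prop)
    (Measurable.ennreal_ofReal (Continuous.measurable (by fun_prop)))]
  rcases (norm_nonneg x).eq_or_lt with hx | hx
  · simp [norm_eq_zero.mp hx.symm]
  calc _ ≤ ∫⁻ t in Ioi 0, ENNReal.ofReal (min 1 ((t * ‖x‖) ^ 2) * t ^ (-α - 1)) := by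
        refine setLIntegral_mono (by fun_prop) fun t (ht : 0 < t) => ?_
        rw [Pi.mul_apply, ← ENNReal.ofReal_mul (by positivity), norm_smul,
          Real.norm_of_nonneg ht.le]
        refine ENNReal.ofReal_le_ofReal ?_
        calc t ^ (-α - 1) * Real.exp (-t) * min 1 ((t * ‖x‖) ^ 2)
            = min 1 ((t * ‖x‖) ^ 2) * t ^ (-α - 1) * Real.exp (-t) := by ring
          _ ≤ min 1 ((t * ‖x‖) ^ 2) * t ^ (-α - 1) :=
            mul_le_of_le_one_right (by positivity) (Real.exp_le_one_iff.mpr (by linarith))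
    _ = ENNReal.ofReal (2 / ((2 - α) * α) * ‖x‖ ^ α) :=
        setLIntegral_Ioi_min_one_sq_mul_rpow hα0 hα2 hx

lemma lintegral_map_smul_prod {R E : Type*} [MeasurableSpace R] [MeasurableSpace E] [SMul R E]
    [MeasurableSMul₂ R E] (ρ : Measure R) (M : Measure E) [SFinite ρ] [SFinite M]
    {f : E → ENNReal} (hf : Measurable f) :
    ∫⁻ y, f y ∂(Measure.map (fun p : R × E => p.1 • p.2) (ρ.prod M)) =
      ∫⁻ x, ∫⁻ t, f (t • x) ∂ρ ∂M := by
  have hsmul : Measurable fun p : R × E => p.1 • p.2 := measurable_fst.smul measurable_snd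
  rw [lintegral_map hf hsmul,
    lintegral_prod_symm (fun p : R × E => f (p.1 • p.2)) (hf.comp hsmul).aemeasurable]

end LevyMeasure

open LevyMeasure

theorem rho_alpha_mixture_is_levy_measure_general
    {H : Type*} [NormedAddCommGroup H] [InnerProductSpace ℝ H]
    [MeasurableSpace H] [BorelSpace H]
    (α : ℝ) (hα0 : 0 < α) (hα2 : α < 2)
    (M : Measure H) [SigmaFinite M]
    (hM : (∫⁻ x, ENNReal.ofReal (‖x‖ ^ α) ∂M) < ⊤) :
    (∫⁻ y, ENNReal.ofReal (min 1 (‖y‖ ^ 2))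
        ∂(Measure.map (fun p : ℝ × H => p.1 • p.2)
          ((((volume : Measure ℝ).restrict (Ioi 0)).withDensity
              (fun t => ENNReal.ofReal (t ^ (-α - 1) * Real.exp (-t)))).prod M))) < ⊤ := by
  have hC : 0 ≤ 2 / ((2 - α) * α) := div_nonneg zero_le_two (by nlinarith)
  change ∫⁻ y, _ ∂(Measure.map _ ((rhoAlpha α).prod M)) < ⊤
  rw [lintegral_map_smul_prod _ _ (by fun_prop)]
  calc ∫⁻ x, ∫⁻ t, ENNReal.ofReal (min 1 (‖t • x‖ ^ 2)) ∂rhoAlpha α ∂M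
      ≤ ∫⁻ x, ENNReal.ofReal (2 / ((2 - α) * α) * ‖x‖ ^ α) ∂M :=
        lintegral_mono fun x => lintegral_min_one_norm_smul_sq_rhoAlpha_le hα0 hα2 x
    _ = ENNReal.ofReal (2 / ((2 - α) * α)) * ∫⁻ x, ENNReal.ofReal (‖x‖ ^ α) ∂M := by
        simp_rw [ENNReal.ofReal_mul hC]
        exact lintegral_const_mul' _ _ ENNReal.ofReal_ne_top
    _ < ⊤ := ENNReal.mul_lt_top ENNReal.ofReal_lt_top hM

theorem rho_alpha_mixture_is_levy_measure
    {H : Type*} [NormedAddCommGroup H] [InnerProductSpace ℝ H]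
    [SecondCountableTopology H] [CompleteSpace H]
    [MeasurableSpace H] [BorelSpace H]
    (α : ℝ) (hα0 : 0 < α) (hα2 : α < 2)
    (M : Measure H) [SigmaFinite M] (hM0 : M {0} = 0)
    (hM : (∫⁻ x, ENNReal.ofReal (‖x‖ ^ α) ∂M) < ⊤) :
    (∫⁻ y, ENNReal.ofReal (min 1 (‖y‖ ^ 2))
        ∂(Measure.map (fun p : ℝ × H => p.1 • p.2)
          ((((volume : Measure ℝ).restrict (Ioi 0)).withDensity
              (fun t => ENNReal.ofReal (t ^ (-α - 1) * Real.exp (-t)))).prod M))) < ⊤ :=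
  rho_alpha_mixture_is_levy_measure_general α hα0 hα2 M hM
end
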